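/- arXiv:math/9802012 — 8 statements merged into one kernel-verified Lean document; each statement's English description precedes it below -/
import Mathlib

section
/- Let R be a commutative ring, let l ≥ 1 be an integer, and let N = e_1 + ⋯ + e_l ∈ R^l be the sum of the standard basis vectors of the free module R^l. Then left multiplication by ι(N) on the exterior algebra Λ_R(R^l) is exact: an element x of the exterior algebra satisfies ι(N) ∧ x = 0 if and only if x = ι(N) ∧ y for some y. Equivalently, the complex 0 → R → Λ^1(R^l) → Λ^2(R^l) → ⋯ → Λ^l(R^l) → 0, whose differentials are x ↦ N ∧ x, is exact. -/
/-- **Exactness of multiplication by `ι N` on the exterior algebra**, where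
`N = e₁ + ⋯ + e_l` is the sum of the standard basis vectors of `R^l`. -/
theorem stmt_0 (R : Type*) [CommRing R] (l : ℕ) (hl : 1 ≤ l)
    (N : Fin l → R) (hN : N = ∑ i : Fin l, Pi.single i (1 : R))
    (x : ExteriorAlgebra R (Fin l → R)) :
    ExteriorAlgebra.ι R N * x = 0 ↔
      ∃ y : ExteriorAlgebra R (Fin l → R), x = ExteriorAlgebra.ι R N * y := by
  constructor
  · intro h
    set d : Module.Dual R (Fin l → R) := LinearMap.proj ⟨0, hl⟩ with hd
    have hdN : d N = 1 := by
      subst hN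
      simp [hd, Finset.sum_apply, Pi.single_apply]
    refine ⟨CliffordAlgebra.contractLeft d x, ?_⟩
    have := CliffordAlgebra.contractLeft_ι_mul (Q := (0 : QuadraticForm R (Fin l → R)))
      (d := d) N x
    rw [h, map_zero, hdN, one_smul] at this
    -- 0 = x - ι N * (d ⌋ x)
    have := this.symm
    rw [sub_eq_zero] at this
    exact this
  · rintro ⟨y, rfl⟩
    rw [← mul_assoc, ExteriorAlgebra.ι_sq_zero, zero_mul]
end

section
/- Let l be a prime, let R be a commutative ring in which l is invertible, let C_l be the cyclic group of order l with generator c, let G = Aut(C_l) ≅ (ℤ/lℤ)^×, and let Γ = C_l ⋊ G. Let V be an R-module with an R-linear action of Γ such that Σ_{i=0}^{l−1} c^i v = 0 for all v ∈ V. Then the map α : V → V^G ⊗_R R[C_l] defined by α(v) = Σ_{i=0}^{l−1} ( Σ_{σ∈G} σ·(c^{−i}·v) ) ⊗ c^i is a well-defined homomorphism of C_l-modules, where C_l acts on the target through left multiplication on the group-algebra factor R[C_l], and the sequence 0 → V →^α V^G ⊗_R R[C_l] →^{id⊗aug} V^G → 0 is a short exact sequence of C_l-modules which admits a C_l-equivariant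 splitting. -/
/-!
Write `y_g = ∑_{σ ∈ G} σ (g⁻¹ v)` for the `g`-coefficient of `α v`; it is `G`-invariant.
Because `G ≅ (ZMod l)ˣ` acts simply transitively on `C_l ∖ {1}`, the relation `∑_h h y = 0` gives,
for `G`-invariant `y`, `∑_σ σ (g y) = (l - 1) y` when `g = 1` and `-y` otherwise. Consequently:
* `∑_g g y_g = l v`, since `g σ g⁻¹ = (g σ(g)⁻¹) σ` and `g ↦ g σ(g)⁻¹` is a bijection for
  `σ ≠ 1`; as `l` is invertible, `α` is injective;
* if `(y_g)` is `G`-invariant with `∑_g y_g = 0`, then `l⁻¹ ∑_h h y_h` has coefficients `y_g`,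
  which is exactness in the middle.
Equivariance is a reindexing of the coefficients, and `w ↦ w ⊗ l⁻¹ ∑_g g` splits `id ⊗ aug`.
-/

open Multiplicative
open scoped TensorProduct

namespace ZMod

noncomputable def mulAutEquivUnits (n : ℕ) : MulAut (Multiplicative (ZMod n)) ≃* (ZMod n)ˣ :=
  (MulAutMultiplicative (ZMod n)).trans (AddAutEquivUnits n).toMultiplicative

lemma mulAutEquivUnits_apply_ofAdd {n : ℕ} (σ : MulAut (Multiplicative (ZMod n))) (i : ZMod n) :
    σ (ofAdd i) = ofAdd (mulAutEquivUnits n σ * i) := by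
  change σ (ofAdd i) = ofAdd ((σ (ofAdd 1)).toAdd * i)
  rw [mul_comm, ← i.intCast_zmod_cast, ← zsmul_eq_mul, ← toAdd_zpow, ← map_zpow, ← ofAdd_zsmul,
    zsmul_one]
  rfl

variable {p : ℕ} [Fact p.Prime]

lemma sum_mulAut_apply_add_apply_one {A : Type*} [AddCommMonoid A]
    (f : Multiplicative (ZMod p) → A) {g : Multiplicative (ZMod p)} (hg : g ≠ 1) :
    ∑ σ : MulAut (Multiplicative (ZMod p)), f (σ g) + f 1 = ∑ h, f h := by
  obtain ⟨k, rfl⟩ := ofAdd.surjective g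
  have hk : k ≠ 0 := hg
  rw [← Finset.sum_erase_add Finset.univ f (Finset.mem_univ 1)]
  congr 1
  refine Finset.sum_bij (fun (σ : MulAut (Multiplicative (ZMod p))) _ => σ (ofAdd k))
    (fun σ _ => by simpa using hg) ?_ ?_ (fun _ _ => rfl)
  · intro σ _ τ _ h
    rw [mulAutEquivUnits_apply_ofAdd, mulAutEquivUnits_apply_ofAdd] at h
    exact (mulAutEquivUnits p).injective (Units.ext (mul_right_cancel₀ hk (ofAdd.injective h)))
  · intro h hh
    obtain ⟨m, rfl⟩ := ofAdd.surjective h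
    have hm : m ≠ 0 := (Finset.ne_of_mem_erase hh :)
    refine ⟨(mulAutEquivUnits p).symm (Units.mk0 (m / k) (div_ne_zero hm hk)),
      Finset.mem_univ _, ?_⟩
    rw [mulAutEquivUnits_apply_ofAdd, MulEquiv.apply_symm_apply, Units.val_mk0,
      div_mul_cancel₀ _ hk]

lemma bijective_mul_inv_mulAut_apply {σ : MulAut (Multiplicative (ZMod p))} (hσ : σ ≠ 1) :
    Function.Bijective fun g => g * (σ g)⁻¹ := by
  have hu : 1 - (mulAutEquivUnits p σ : ZMod p) ≠ 0 := by
    rw [sub_ne_zero, ne_comm, Ne, Units.val_eq_one, MulEquiv.map_eq_one_iff]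
    exact hσ
  refine Finite.injective_iff_bijective.mp fun g h hgh => ?_
  obtain ⟨i, rfl⟩ := ofAdd.surjective g
  obtain ⟨j, rfl⟩ := ofAdd.surjective h
  simp only [mulAutEquivUnits_apply_ofAdd, ← ofAdd_neg, ← ofAdd_add,
    EmbeddingLike.apply_eq_iff_eq] at hgh
  exact congrArg ofAdd (mul_left_cancel₀ hu (by linear_combination hgh))

end ZMod

namespace TensorProduct

variable {R M : Type*} [CommSemiring R] [AddCommMonoid M] [Module R M]

lemma bijective_sum_tmul_single (ι : Type*) [Fintype ι] :
    Function.Bijective fun w : ι → M => ∑ i, w i ⊗ₜ[R] Finsupp.single i (1 : R) := by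
  classical
  convert ((finsuppScalarRight R R M ι).trans
    (Finsupp.linearEquivFunOnFinite R M ι)).symm.bijective using 1
  ext w
  rw [LinearEquiv.symm_trans_apply]
  change _ = (finsuppScalarRight R R M ι).symm (Finsupp.equivFunOnFinite.symm w)
  simp [Finsupp.equivFunOnFinite_symm_eq_sum]

lemma map_lmapDomain_mul_left_sum_tmul_single {C : Type*} [Group C] [Fintype C] (a : C)
    (w : C → M) :
    map LinearMap.id (Finsupp.lmapDomain R R (a * ·)) (∑ g, w g ⊗ₜ[R] Finsupp.single g (1 : R)) =
      ∑ g, w (a⁻¹ * g) ⊗ₜ[R] Finsupp.single g (1 : R) := by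
  simp only [map_sum, map_tmul, LinearMap.id_apply, Finsupp.lmapDomain_apply,
    Finsupp.mapDomain_single]
  exact Fintype.sum_equiv (Equiv.mulLeft a) _ _ (fun g => by simp)

lemma rid_map_sum_tmul_single {ι : Type*} [Fintype ι] {aug : (ι →₀ R) →ₗ[R] R}
    (haug : ∀ i, aug (Finsupp.single i 1) = 1) (w : ι → M) :
    (TensorProduct.rid R M) (map LinearMap.id aug (∑ i, w i ⊗ₜ[R] Finsupp.single i 1)) =
      ∑ i, w i := by
  simp [haug]

variable {C : Type*} [Group C] [Fintype C] {aug : (C →₀ R) →ₗ[R] R}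

lemma rid_map_map_lmapDomain_mul_left (haug : ∀ g, aug (Finsupp.single g 1) = 1) (a : C)
    (x : M ⊗[R] (C →₀ R)) :
    TensorProduct.rid R M
        (map LinearMap.id aug (map LinearMap.id (Finsupp.lmapDomain R R (a * ·)) x)) =
      TensorProduct.rid R M (map LinearMap.id aug x) := by
  obtain ⟨w, rfl⟩ := (bijective_sum_tmul_single C).surjective x
  rw [map_lmapDomain_mul_left_sum_tmul_single, rid_map_sum_tmul_single haug,
    rid_map_sum_tmul_single haug]
  exact Fintype.sum_equiv (Equiv.mulLeft a⁻¹) _ _ fun _ => rfl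

lemma exists_invariant_rightInverse_rid_comp_map (hC : IsUnit (Fintype.card C : R))
    (haug : ∀ g, aug (Finsupp.single g 1) = 1) :
    ∃ s : M →ₗ[R] M ⊗[R] (C →₀ R),
      ((TensorProduct.rid R M).toLinearMap ∘ₗ map LinearMap.id aug) ∘ₗ s = LinearMap.id ∧
      ∀ (a : C) (w : M), map LinearMap.id (Finsupp.lmapDomain R R (a * ·)) (s w) = s w := by
  obtain ⟨u, hu⟩ := hC
  let s : M →ₗ[R] M ⊗[R] (C →₀ R) :=
    (↑u⁻¹ : R) • (TensorProduct.mk R M _).flip (∑ g, Finsupp.single g 1)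
  have hs (w : M) : s w = ∑ g, ((↑u⁻¹ : R) • w) ⊗ₜ Finsupp.single g (1 : R) := by
    simp [s, Finset.smul_sum, TensorProduct.smul_tmul']
  refine ⟨s, LinearMap.ext fun w => ?_, fun a w => ?_⟩
  · rw [LinearMap.comp_apply, LinearMap.comp_apply, hs, LinearEquiv.coe_coe,
      rid_map_sum_tmul_single haug]
    simp [← Nat.cast_smul_eq_nsmul R, ← hu, smul_smul]
  · rw [hs, map_lmapDomain_mul_left_sum_tmul_single]

end TensorProduct

namespace Representation

open SemidirectProduct

lemma norm_apply {k G V : Type*} [Semiring k] [Group G] [Fintype G] [AddCommMonoid V]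
    [Module k V] (ρ : Representation k G V) (x : V) : norm ρ x = ∑ g, ρ g x :=
  LinearMap.sum_apply _ _ _

lemma iInf_ker_sub_id_eq_invariants {k G V : Type*} [CommRing k] [Group G] [AddCommGroup V]
    [Module k V] (ρ : Representation k G V) :
    ⨅ g, LinearMap.ker (ρ g - LinearMap.id) = invariants ρ := by
  ext v
  simp [mem_invariants, sub_eq_zero]

section Semidirect

variable {k N G V : Type*} [CommRing k] [Group N] [Group G] {φ : G →* MulAut N}
  [AddCommGroup V] [Module k V] (ρ : Representation k (N ⋊[φ] G) V)

lemma inr_apply_inl_apply (g : G) (n : N) (v : V) :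
    ρ (inr g) (ρ (inl n) v) = ρ (inl (φ g n)) (ρ (inr g) v) := by
  rw [← Module.End.mul_apply, ← map_mul, ← Module.End.mul_apply, ← map_mul, inl_aut,
    mul_assoc, ← map_mul, inv_mul_cancel, map_one, mul_one]

variable [Fintype G]

/-- For `n = cⁱ` this is the coefficient of `cⁱ` in `α v`. -/
noncomputable def normTranslate (n : N) : V →ₗ[k] invariants (ρ.comp inr) :=
  (norm (ρ.comp inr) ∘ₗ ρ (inl n⁻¹)).codRestrict _ fun _ σ => self_norm_apply _ σ _

lemma coe_normTranslate (n : N) (v : V) :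
    (normTranslate ρ n v : V) = norm (ρ.comp inr) (ρ (inl n⁻¹) v) :=
  rfl

lemma normTranslate_inl (n a : N) (v : V) :
    normTranslate ρ n (ρ (inl a) v) = normTranslate ρ (a⁻¹ * n) v := by
  apply Subtype.ext
  rw [coe_normTranslate, coe_normTranslate, mul_inv_rev, inv_inv, map_mul, map_mul,
    Module.End.mul_apply]

variable [Fintype N]

lemma sum_normTranslate (hsum : ∀ v, ∑ n, ρ (inl n) v = 0) (v : V) :
    ∑ n, normTranslate ρ n v = 0 := by
  apply Subtype.ext
  simp only [Submodule.coe_sum, coe_normTranslate, Submodule.coe_zero]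
  rw [← map_sum, Fintype.sum_equiv (Equiv.inv N) (fun n => ρ (inl n⁻¹) v) (fun n => ρ (inl n) v)
    (fun _ => rfl), hsum, map_zero]

lemma map_inl_of_eq_sum_normTranslate_tmul
    {α : V →ₗ[k] invariants (ρ.comp inr) ⊗[k] (N →₀ k)}
    (hα : ∀ v, α v = ∑ n, normTranslate ρ n v ⊗ₜ Finsupp.single n 1) (a : N) (v : V) :
    α (ρ (inl a) v) = TensorProduct.map LinearMap.id (Finsupp.lmapDomain k k (a * ·)) (α v) := by
  simp only [hα, normTranslate_inl, TensorProduct.map_lmapDomain_mul_left_sum_tmul_single]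

end Semidirect

section Cyclic

variable {k V : Type*} [CommRing k] [AddCommGroup V] [Module k V] {p : ℕ} [Fact p.Prime]
  {ρ : Representation k
    (Multiplicative (ZMod p) ⋊[MonoidHom.id (MulAut (Multiplicative (ZMod p)))]
      MulAut (Multiplicative (ZMod p))) V}

lemma norm_comp_inr_inl_add_of_mem_invariants (hsum : ∀ v, ∑ g, ρ (inl g) v = 0) {y : V}
    (hy : y ∈ invariants (ρ.comp inr)) (g : Multiplicative (ZMod p)) :
    norm (ρ.comp inr) (ρ (inl g) y) + y = if g = 1 then p • y else 0 := by
  have hy' : ∀ σ, ρ (inr σ) y = y := hy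
  have hnorm : norm (ρ.comp inr) (ρ (inl g) y) =
      ∑ σ : MulAut (Multiplicative (ZMod p)), ρ (inl (σ g)) y := by
    simp only [norm_apply, MonoidHom.comp_apply, inr_apply_inl_apply, hy', MonoidHom.id_apply]
  rw [hnorm]
  split_ifs with hg
  · subst hg
    -- `|G| + 1 = p`, read off from the orbit of `ofAdd 1`
    have h1 : (ofAdd 1 : Multiplicative (ZMod p)) ≠ 1 := ofAdd_eq_one.not.mpr one_ne_zero
    simpa using ZMod.sum_mulAut_apply_add_apply_one (fun _ => y) h1
  · simpa [hsum] using ZMod.sum_mulAut_apply_add_apply_one (fun h => ρ (inl h) y) hg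

lemma sum_inl_normTranslate (hsum : ∀ v, ∑ g, ρ (inl g) v = 0) (v : V) :
    ∑ g, ρ (inl g) (normTranslate ρ g v) = p • v := by
  have hconj (g : Multiplicative (ZMod p)) (σ : MulAut (Multiplicative (ZMod p))) :
      ρ (inl g) (ρ (inr σ) (ρ (inl g⁻¹) v)) = ρ (inl (g * (σ g)⁻¹)) (ρ (inr σ) v) := by
    rw [inr_apply_inl_apply, MonoidHom.id_apply, map_inv, ← Module.End.mul_apply, ← map_mul,
      ← map_mul]
  simp only [coe_normTranslate, norm_apply, map_sum, MonoidHom.comp_apply, hconj]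
  rw [Finset.sum_comm, Finset.sum_eq_single (1 : MulAut (Multiplicative (ZMod p)))]
  · simp
  · intro σ _ hσ
    exact (Fintype.sum_bijective _ (ZMod.bijective_mul_inv_mulAut_apply hσ) _
      (fun h => ρ (inl h) (ρ (inr σ) v)) (fun _ => rfl)).trans (hsum _)
  · simp

lemma normTranslate_sum_inl (hsum : ∀ v, ∑ g, ρ (inl g) v = 0)
    (y : Multiplicative (ZMod p) → invariants (ρ.comp inr)) (hy : ∑ h, y h = 0)
    (g : Multiplicative (ZMod p)) :
    normTranslate ρ g (∑ h, ρ (inl h) (y h)) = p • y g := by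
  have hmul (h : Multiplicative (ZMod p)) :
      ρ (inl g⁻¹) (ρ (inl h) (y h)) = ρ (inl (g⁻¹ * h)) (y h) := by
    rw [← Module.End.mul_apply, ← map_mul, ← map_mul]
  apply Subtype.ext
  have hy' : ∑ h, (y h : V) = 0 := by rw [← Submodule.coe_sum, hy, Submodule.coe_zero]
  rw [coe_normTranslate, ← add_zero (norm _ _), ← hy']
  simp only [map_sum, hmul, ← Finset.sum_add_distrib,
    norm_comp_inr_inl_add_of_mem_invariants hsum (y _).2, inv_mul_eq_one]
  simp

lemma eq_sum_normTranslate_tmul_of_map_subtype_eq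
    {α : V →ₗ[k] invariants (ρ.comp inr) ⊗[k] (Multiplicative (ZMod p) →₀ k)} {v : V}
    (h : TensorProduct.map (invariants (ρ.comp inr)).subtype LinearMap.id (α v) =
      ∑ i : ZMod p,
        (∑ σ : MulAut (Multiplicative (ZMod p)), ρ (inr σ) (ρ (inl (ofAdd (-i))) v))
          ⊗ₜ[k] Finsupp.single (ofAdd i) (1 : k)) :
    α v = ∑ g, normTranslate ρ g v ⊗ₜ Finsupp.single g 1 := by
  apply Module.Flat.rTensor_preserves_injective_linearMap _
    (invariants (ρ.comp inr)).injective_subtype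
  change TensorProduct.map _ LinearMap.id (α v) = TensorProduct.map _ LinearMap.id _
  rw [h, map_sum]
  exact Fintype.sum_equiv ofAdd _ _ fun _ => by simp [coe_normTranslate, norm_apply]

variable {α : V →ₗ[k] invariants (ρ.comp inr) ⊗[k] (Multiplicative (ZMod p) →₀ k)}

lemma injective_of_eq_sum_normTranslate_tmul (hsum : ∀ v, ∑ g, ρ (inl g) v = 0)
    (hp : IsUnit (p : k)) (hα : ∀ v, α v = ∑ g, normTranslate ρ g v ⊗ₜ Finsupp.single g 1) :
    Function.Injective α := by
  intro v w hvw
  have hc : (fun g => normTranslate ρ g v) = fun g => normTranslate ρ g w :=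
    (TensorProduct.bijective_sum_tmul_single _).injective (by simpa only [hα] using hvw)
  rw [← hp.smul_left_cancel, Nat.cast_smul_eq_nsmul, Nat.cast_smul_eq_nsmul,
    ← sum_inl_normTranslate hsum, ← sum_inl_normTranslate hsum]
  exact Finset.sum_congr rfl fun g _ => by rw [congrFun hc g]

lemma range_eq_ker_of_eq_sum_normTranslate_tmul (hsum : ∀ v, ∑ g, ρ (inl g) v = 0)
    (hp : IsUnit (p : k)) (hα : ∀ v, α v = ∑ g, normTranslate ρ g v ⊗ₜ Finsupp.single g 1)
    {aug : (Multiplicative (ZMod p) →₀ k) →ₗ[k] k} (haug : ∀ g, aug (Finsupp.single g 1) = 1) :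
    LinearMap.range α = LinearMap.ker
      ((_root_.TensorProduct.rid k (invariants (ρ.comp inr))).toLinearMap ∘ₗ
        TensorProduct.map LinearMap.id aug) := by
  apply le_antisymm
  · rintro _ ⟨v, rfl⟩
    rw [LinearMap.mem_ker, LinearMap.comp_apply, LinearEquiv.coe_coe, hα,
      TensorProduct.rid_map_sum_tmul_single haug, sum_normTranslate ρ hsum]
  · intro x hx
    obtain ⟨y, rfl⟩ := (TensorProduct.bijective_sum_tmul_single _).surjective x
    rw [LinearMap.mem_ker, LinearMap.comp_apply, LinearEquiv.coe_coe,
      TensorProduct.rid_map_sum_tmul_single haug] at hx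
    obtain ⟨u, hu⟩ := hp
    refine ⟨(↑u⁻¹ : k) • ∑ h, ρ (inl h) (y h), ?_⟩
    simp only [hα, map_smul, normTranslate_sum_inl hsum y hx, ← Nat.cast_smul_eq_nsmul k, ← hu,
      smul_smul, Units.inv_mul, one_smul]

end Cyclic

end Representation

open SemidirectProduct in
open scoped TensorProduct in
/-- Let `l` be a prime invertible in the commutative ring `R`, `C_l` the cyclic group
of order `l` with generator `c`, `G = Aut(C_l)`, `Γ = C_l ⋊ G`, and let `V` be an
`R`-linear representation of `Γ` with `∑_{i=0}^{l-1} cⁱ·v = 0` for all `v`.  Then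
`α : V → V^G ⊗_R R[C_l]`, `v ↦ ∑ᵢ (∑_{σ∈G} σ·(c⁻ⁱ·v)) ⊗ cⁱ`, is a well-defined
homomorphism of `C_l`-modules and `0 → V → V^G ⊗ R[C_l] → V^G → 0` (with second map
`id ⊗ aug`) is a short exact sequence of `C_l`-modules admitting a `C_l`-equivariant
splitting. -/
theorem stmt_3 (l : ℕ) (hl : l.Prime) [NeZero l]
    (R : Type*) [CommRing R] (hinv : IsUnit (l : R))
    (V : Type*) [AddCommGroup V] [Module R V]
    (ρ : Representation R
      (Multiplicative (ZMod l) ⋊[MonoidHom.id (MulAut (Multiplicative (ZMod l)))]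
        MulAut (Multiplicative (ZMod l))) V)
    (hsum : ∀ v : V, ∑ i : ZMod l, ρ (SemidirectProduct.inl (Multiplicative.ofAdd i)) v = 0)
    (VG : Submodule R V)
    (hVG : VG = ⨅ σ : MulAut (Multiplicative (ZMod l)),
      LinearMap.ker (ρ (SemidirectProduct.inr σ) - LinearMap.id))
    (α : V →ₗ[R] (↥VG) ⊗[R] (Multiplicative (ZMod l) →₀ R))
    (hα : ∀ v : V,
      TensorProduct.map VG.subtype LinearMap.id (α v) =
        ∑ i : ZMod l,
          (∑ σ : MulAut (Multiplicative (ZMod l)),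
              ρ (SemidirectProduct.inr σ)
                (ρ (SemidirectProduct.inl (Multiplicative.ofAdd (-i))) v))
            ⊗ₜ[R] Finsupp.single (Multiplicative.ofAdd i) (1 : R))
    (aug : (Multiplicative (ZMod l) →₀ R) →ₗ[R] R)
    (haug : ∀ (a : Multiplicative (ZMod l)) (r : R), aug (Finsupp.single a r) = r)
    (β : (↥VG) ⊗[R] (Multiplicative (ZMod l) →₀ R) →ₗ[R] VG)
    (hβ : β = (TensorProduct.rid R VG).toLinearMap ∘ₗ TensorProduct.map LinearMap.id aug) :
    Function.Injective α ∧
    LinearMap.range α = LinearMap.ker β ∧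
    Function.Surjective β ∧
    (∀ (a : Multiplicative (ZMod l)) (v : V),
      α (ρ (SemidirectProduct.inl a) v) =
        TensorProduct.map LinearMap.id (Finsupp.lmapDomain R R (a * ·)) (α v)) ∧
    (∀ (a : Multiplicative (ZMod l)) (x : (↥VG) ⊗[R] (Multiplicative (ZMod l) →₀ R)),
      β (TensorProduct.map LinearMap.id (Finsupp.lmapDomain R R (a * ·)) x) = β x) ∧
    ∃ s : VG →ₗ[R] (↥VG) ⊗[R] (Multiplicative (ZMod l) →₀ R),
      β ∘ₗ s = LinearMap.id ∧
      ∀ (a : Multiplicative (ZMod l)) (w : VG),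
        TensorProduct.map LinearMap.id (Finsupp.lmapDomain R R (a * ·)) (s w) = s w := by
  have : Fact l.Prime := ⟨hl⟩
  replace hsum (v : V) : ∑ g, ρ (inl g) v = 0 :=
    (Fintype.sum_equiv ofAdd _ (fun g => ρ (inl g) v) fun _ => rfl).symm.trans (hsum v)
  replace haug (g : Multiplicative (ZMod l)) : aug (Finsupp.single g 1) = 1 := haug g 1
  have hcard : IsUnit (Fintype.card (Multiplicative (ZMod l)) : R) := by simpa using hinv
  obtain ⟨s, hs, hs_inv⟩ :=
    TensorProduct.exists_invariant_rightInverse_rid_comp_map (M := VG) hcard haug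
  obtain rfl : VG = Representation.invariants (ρ.comp inr) :=
    hVG.trans (Representation.iInf_ker_sub_id_eq_invariants (ρ.comp inr))
  replace hα (v : V) := Representation.eq_sum_normTranslate_tmul_of_map_subtype_eq (hα v)
  subst hβ
  exact ⟨Representation.injective_of_eq_sum_normTranslate_tmul hsum hinv hα,
    Representation.range_eq_ker_of_eq_sum_normTranslate_tmul hsum hinv hα haug,
    fun w => ⟨s w, LinearMap.congr_fun hs w⟩,
    Representation.map_inl_of_eq_sum_normTranslate_tmul ρ hα,
    TensorProduct.rid_map_map_lmapDomain_mul_left haug,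
    s, hs, hs_inv⟩
end

section
/- Let A be a commutative ring, let B be a commutative A-algebra generated as an A-algebra by elements x_1, …, x_n, and let l ≥ 1. Then the kernel I of the l-fold multiplication map μ : B^{⊗_A l} → B is generated as an ideal of B^{⊗_A l} by the n(l−1) elements ι_i(x_j) − ι_{i+1}(x_j) for 1 ≤ i ≤ l−1 and 1 ≤ j ≤ n. -/
open scoped TensorProduct in
/-- If `B` is a commutative `A`-algebra generated by `x₁, …, xₙ` and `l ≥ 1`, then the
kernel of the `l`-fold multiplication map `μ : B^{⊗_A l} → B` is generated as an ideal
by the elements `ιᵢ(xⱼ) − ιᵢ₊₁(xⱼ)` (`1 ≤ i ≤ l−1`, `1 ≤ j ≤ n`), where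
`ιᵢ : B → B^{⊗_A l}` places `b` in the `i`-th tensor factor and `1` elsewhere. -/
theorem stmt_4 (A : Type*) [CommRing A] (B : Type*) [CommRing B] [Algebra A B]
    (n : ℕ) (x : Fin n → B) (hx : Algebra.adjoin A (Set.range x) = ⊤)
    (l : ℕ) (hl : 1 ≤ l)
    (μ : (⨂[A] _ : Fin l, B) →ₐ[A] B)
    (hμ : ∀ b : Fin l → B, μ (PiTensorProduct.tprod A b) = ∏ i, b i) :
    RingHom.ker μ =
      Ideal.span { y : ⨂[A] _ : Fin l, B |
        ∃ (i : Fin (l - 1)) (j : Fin n),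
          y = PiTensorProduct.tprod A
                (Function.update (fun _ => (1 : B)) (Fin.cast (by omega) i.castSucc) (x j))
            - PiTensorProduct.tprod A
                (Function.update (fun _ => (1 : B)) (Fin.cast (by omega) i.succ) (x j)) } := by
  set ι : Fin l → (B →ₐ[A] ⨂[A] _ : Fin l, B) :=
    fun i => PiTensorProduct.singleAlgHom (R := A) (A := fun _ : Fin l => B) i with hι
  have hιapp : ∀ (i : Fin l) (b : B),
      ι i b = PiTensorProduct.tprod A (Function.update (fun _ => (1 : B)) i b) := by
    intro i b; rfl
  have hμι : ∀ (i : Fin l) (b : B), μ (ι i b) = b := by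
    intro i b
    rw [hιapp, hμ]
    have : (Function.update (fun _ => (1 : B)) i b) = Pi.mulSingle i b := rfl
    rw [this, Fintype.prod_pi_mulSingle' i b]
  set J := Ideal.span { y : ⨂[A] _ : Fin l, B |
        ∃ (i : Fin (l - 1)) (j : Fin n),
          y = PiTensorProduct.tprod A
                (Function.update (fun _ => (1 : B)) (Fin.cast (by omega) i.castSucc) (x j))
            - PiTensorProduct.tprod A
                (Function.update (fun _ => (1 : B)) (Fin.cast (by omega) i.succ) (x j)) }
    with hJ
  have hle : J ≤ RingHom.ker μ := by
    rw [hJ, Ideal.span_le]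
    rintro y ⟨i, j, rfl⟩
    simp only [SetLike.mem_coe, RingHom.mem_ker, map_sub]
    rw [← hιapp, ← hιapp, hμι, hμι, sub_self]
  refine le_antisymm ?_ hle
  -- quotient map
  set q : (⨂[A] _ : Fin l, B) →ₐ[A] (⨂[A] _ : Fin l, B) ⧸ J := Ideal.Quotient.mkₐ A J with hq
  set z : Fin l := ⟨0, hl⟩ with hz
  -- generators are equal mod J
  have hgen : ∀ (i : Fin (l - 1)) (j : Fin n),
      q (ι (Fin.cast (by omega) i.castSucc) (x j)) = q (Fin.cast (by omega) i.succ |> ι <| x j) := by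
    intro i j
    rw [hq]
    simp only [Ideal.Quotient.mkₐ_eq_mk]
    rw [Ideal.Quotient.eq]
    apply Ideal.subset_span
    exact ⟨i, j, by rw [hιapp, hιapp]⟩
  -- all coordinate embeddings agree mod J on generators
  have hchain : ∀ (k : Fin l) (j : Fin n), q (ι k (x j)) = q (ι z (x j)) := by
    intro k j
    obtain ⟨m, hm⟩ := k
    induction m with
    | zero =>
      rw [show (⟨0, hm⟩ : Fin l) = z from by rw [hz]]
    | succ m ih =>
      have hm' : m < l - 1 := by omega
      have h1 : (⟨m + 1, hm⟩ : Fin l) = Fin.cast (by omega) (Fin.succ ⟨m, hm'⟩) := by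
        ext; simp
      have h2 : (⟨m, by omega⟩ : Fin l) = Fin.cast (by omega) (Fin.castSucc ⟨m, hm'⟩) := by
        ext; simp
      rw [h1, ← hgen ⟨m, hm'⟩ j, ← h2, ih (by omega)]
  -- all coordinate embeddings agree mod J
  have hkey : ∀ (k : Fin l) (b : B), q (ι k b) = q (ι z b) := by
    intro k b
    have hsub : Algebra.adjoin A (Set.range x) ≤
        AlgHom.equalizer (q.comp (ι k)) (q.comp (ι z)) := by
      apply Algebra.adjoin_le
      rintro _ ⟨j, rfl⟩
      exact hchain k j
    have : b ∈ AlgHom.equalizer (q.comp (ι k)) (q.comp (ι z)) := by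
      apply hsub; rw [hx]; trivial
    simpa using this
  -- on pure tensors, q t = q (ι z (μ t))
  have hpure : ∀ b : Fin l → B,
      q (PiTensorProduct.tprod A b) = q (ι z (μ (PiTensorProduct.tprod A b))) := by
    intro b
    have hb : PiTensorProduct.tprod A b = ∏ i, ι i (b i) := by
      have h := map_prod (PiTensorProduct.tprodMonoidHom A (A := fun _ : Fin l => B))
        (fun i => Pi.mulSingle i (b i)) Finset.univ
      rw [Finset.univ_prod_mulSingle b] at h
      exact h
    rw [hμ, hb, map_prod]
    calc ∏ i, q (ι i (b i)) = ∏ i, q (ι z (b i)) :=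
          Finset.prod_congr rfl fun i _ => hkey i (b i)
      _ = q (ι z (∏ i, b i)) := by rw [map_prod, map_prod]
  have hall : ∀ t : ⨂[A] _ : Fin l, B, q t = q (ι z (μ t)) := by
    intro t
    induction t using PiTensorProduct.induction_on with
    | smul_tprod a b => simp only [map_smul]; rw [hpure]
    | add t₁ t₂ h₁ h₂ => simp only [map_add]; rw [h₁, h₂]
  intro t ht
  rw [RingHom.mem_ker] at ht
  have : q t = 0 := by rw [hall, ht, map_zero, map_zero]
  rwa [hq, Ideal.Quotient.mkₐ_eq_mk, Ideal.Quotient.eq_zero_iff_mem] at this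
end

section
/- Let l be a prime and let G be a finite group whose order is not divisible by l. Let T = {g : ℤ/lℤ → G | g(0) = 1}. Define an action of ℤ/lℤ on T by (i·g)(k) = g(i)^{-1}·g(i+k) and an action of G on T by (γ·g)(k) = γ^{-1}·g(k)·γ; these two actions commute. Then for every g ∈ T which is not the constant function 1, the map ℤ/lℤ × {γ·g : γ ∈ G} → T sending (i, h) to i·h is injective. -/
/-- Let `l` be a prime not dividing the order of the finite group `G`, and let
`T = {g : ℤ/lℤ → G | g 0 = 1}` with the normalized cyclic rotation action of `ℤ/lℤ`
(`(i·g) k = (g i)⁻¹ * g (i+k)`) and the componentwise conjugation action of `G`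
(`(γ·g) k = γ⁻¹ * g k * γ`).  These are commuting actions, and for every `g ∈ T`
which is not constantly `1`, the map `ℤ/lℤ × {γ·g : γ ∈ G} → T`, `(i,h) ↦ i·h`,
is injective. -/
theorem stmt_7 (l : ℕ) (hl : l.Prime) (G : Type*) [Group G] [Fintype G]
    (hG : ¬ l ∣ Fintype.card G)
    (act : ZMod l → (ZMod l → G) → (ZMod l → G))
    (hact : ∀ i g k, act i g k = (g i)⁻¹ * g (i + k))
    (conj : G → (ZMod l → G) → (ZMod l → G))
    (hconj : ∀ γ g k, conj γ g k = γ⁻¹ * g k * γ) :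
    (∀ i g, act i g 0 = 1) ∧
    (∀ i j g, act i (act j g) = act (i + j) g) ∧
    (∀ γ δ g, conj γ (conj δ g) = conj (δ * γ) g) ∧
    (∀ i γ g, act i (conj γ g) = conj γ (act i g)) ∧
    ∀ g : ZMod l → G, g 0 = 1 → g ≠ (fun _ => 1) →
      ∀ (i i' : ZMod l) (γ γ' : G),
        act i (conj γ g) = act i' (conj γ' g) → i = i' ∧ conj γ g = conj γ' g := by
  haveI : Fact l.Prime := ⟨hl⟩
  have part1 : ∀ i g, act i g 0 = 1 := by
    intro i g; rw [hact]; simp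
  have part2 : ∀ i j g, act i (act j g) = act (i + j) g := by
    intro i j g; funext k
    rw [hact, hact, hact, hact, show j + (i + k) = i + j + k by ring,
      show j + i = i + j by ring]
    group
  have part3 : ∀ γ δ g, conj γ (conj δ g) = conj (δ * γ) g := by
    intro γ δ g; funext k
    rw [hconj, hconj, hconj]; group
  have part4 : ∀ i γ g, act i (conj γ g) = conj γ (act i g) := by
    intro i γ g; funext k
    rw [hact, hconj, hconj, hconj, hact]; group
  have hact0 : ∀ f : ZMod l → G, f 0 = 1 → act 0 f = f := by
    intro f hf; funext k; rw [hact, hf, zero_add]; group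
  have hconj1 : ∀ f : ZMod l → G, conj 1 f = f := by
    intro f; funext k; rw [hconj]; group
  -- key lemma
  have key : ∀ (h : ZMod l → G), h 0 = 1 → h ≠ (fun _ => 1) →
      ∀ (j : ZMod l) (δ : G), act j h = conj δ h → j = 0 := by
    intro h h0 hne j δ heq
    by_contra hj
    have iter : ∀ n : ℕ, act ((n : ZMod l) * j) h = conj (δ ^ n) h := by
      intro n; induction n with
      | zero => simpa [hact0 h h0] using (hconj1 h).symm
      | succ n ih =>
          have : ((n + 1 : ℕ) : ZMod l) * j = j + (n : ZMod l) * j := by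
            push_cast; ring
          rw [this, ← part2, ih, part4, heq, part3, pow_succ']
    set N := orderOf δ with hN
    have hNdvd : N ∣ Fintype.card G := orderOf_dvd_card
    have hNl : ¬ l ∣ N := fun hd => hG (hd.trans hNdvd)
    set e : ZMod l := (N : ZMod l) * j with he_def
    have he : e ≠ 0 := by
      apply mul_ne_zero _ hj
      rw [Ne, ZMod.natCast_eq_zero_iff]; exact hNl
    have hacte : act e h = h := by
      rw [he_def, iter N, pow_orderOf_eq_one, hconj1]
    have hmul : ∀ k, h (e + k) = h e * h k := by
      intro k
      have := congrFun hacte k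
      rw [hact] at this
      rw [← this]; group
    have hpow : ∀ n : ℕ, h ((n : ZMod l) * e) = (h e) ^ n := by
      intro n; induction n with
      | zero => simpa using h0
      | succ n ih =>
          have : ((n + 1 : ℕ) : ZMod l) * e = e + (n : ZMod l) * e := by
            push_cast; ring
          rw [this, hmul, ih, ← pow_succ']
    have hpl : (h e) ^ l = 1 := by
      rw [← hpow l, ZMod.natCast_self, zero_mul, h0]
    have he1 : h e = 1 := by
      have h1 : orderOf (h e) ∣ l := orderOf_dvd_of_pow_eq_one hpl
      have h2 : orderOf (h e) ∣ Fintype.card G := orderOf_dvd_card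
      rcases (Nat.Prime.eq_one_or_self_of_dvd hl _ h1) with h3 | h3
      · exact orderOf_eq_one_iff.mp h3
      · exact absurd (h3 ▸ h2) hG
    apply hne
    funext k
    have hk : ((k * e⁻¹).val : ZMod l) * e = k := by
      rw [ZMod.natCast_val, ZMod.cast_id, inv_mul_cancel_right₀ he]
    calc h k = h (((k * e⁻¹).val : ZMod l) * e) := by rw [hk]
      _ = (h e) ^ (k * e⁻¹).val := hpow _
      _ = 1 := by rw [he1, one_pow]
  refine ⟨part1, part2, part3, part4, ?_⟩
  intro g hg0 hgne i i' γ γ' heq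
  have hh0 : ∀ δ : G, conj δ g 0 = 1 := by intro δ; rw [hconj, hg0]; group
  have hhne : conj γ g ≠ (fun _ => 1) := by
    intro hc
    apply hgne
    have : conj γ⁻¹ (conj γ g) = g := by rw [part3, mul_inv_cancel, hconj1]
    rw [← this, hc]
    funext k; rw [hconj]; group
  have hstep : act (i - i') (conj γ g) = conj γ' g := by
    have := congrArg (act (-i')) heq
    rw [part2, part2, neg_add_cancel, hact0 _ (hh0 γ')] at this
    rw [← this, neg_add_eq_sub]
  have hδ : act (i - i') (conj γ g) = conj (γ⁻¹ * γ') (conj γ g) := by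
    rw [hstep, part3]
    group
  have hii : i = i' := by
    have := key (conj γ g) (hh0 γ) hhne (i - i') (γ⁻¹ * γ') hδ
    exact sub_eq_zero.mp this
  refine ⟨hii, ?_⟩
  subst hii
  have := congrArg (act (-i)) heq
  rwa [part2, part2, neg_add_cancel, hact0 _ (hh0 γ), hact0 _ (hh0 γ')] at this
end

section
/- Let l be a prime and let G be a finite group whose order is not divisible by l. Let T = {g : ℤ/lℤ → G | g(0) = 1}, with the ℤ/lℤ-action (i·g)(k) = g(i)^{-1}·g(i+k) and the G-action (γ·g)(k) = γ^{-1}·g(k)·γ. Then there exists a subset M of T∖{1} (where 1 denotes the constant function with value 1) which is stable under the G-action and such that the map ℤ/lℤ × M → T∖{1} sending (i, m) to i·m is bijective; that is, there is a G-stable system of representatives for the set of ℤ/lℤ-orbits on T∖{1}, and every such orbit is free. -/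
namespace Stmt8Aux

variable {l : ℕ} {G : Type*} [Group G]

/-- normalized cyclic rotation -/
def A (i : ZMod l) (g : ZMod l → G) : ZMod l → G := fun k => (g i)⁻¹ * g (i + k)

/-- componentwise conjugation -/
def C (γ : G) (g : ZMod l → G) : ZMod l → G := fun k => γ⁻¹ * g k * γ

lemma A_zero {g : ZMod l → G} (hg : g 0 = 1) : A 0 g = g := by
  funext k; simp [A, hg]

lemma A_A (i j : ZMod l) (g : ZMod l → G) : A i (A j g) = A (j + i) g := by
  funext k
  simp only [A, mul_inv_rev, inv_inv, mul_assoc, mul_inv_cancel_left, add_assoc]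

lemma C_C (γ δ : G) (g : ZMod l → G) : C δ (C γ g) = C (γ * δ) g := by
  funext k; simp [C, mul_assoc]

lemma C_one (g : ZMod l → G) : C (1 : G) g = g := by
  funext k; simp [C]

lemma A_C (i : ZMod l) (γ : G) (g : ZMod l → G) : A i (C γ g) = C γ (A i g) := by
  funext k; simp [A, C, mul_assoc]

lemma A_apply_zero (i : ZMod l) (g : ZMod l → G) : A i g 0 = 1 := by
  simp [A]

lemma C_apply_zero {γ : G} {g : ZMod l → G} (hg : g 0 = 1) : C γ g 0 = 1 := by
  simp [C, hg]

lemma C_ne_one {γ : G} {g : ZMod l → G} (hg : g ≠ fun _ => 1) : C γ g ≠ fun _ => 1 := by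
  intro h
  apply hg
  funext k
  have := congrFun h k
  simp only [C] at this
  have : g k = γ * 1 * γ⁻¹ := by
    rw [← this]; group
  simpa using this

lemma A_ne_one {i : ZMod l} {g : ZMod l → G} (hg0 : g 0 = 1) (hg : g ≠ fun _ => 1) :
    A i g ≠ fun _ => 1 := by
  intro h
  apply hg
  have hconst : ∀ k, g (i + k) = g i := by
    intro k
    have := congrFun h k
    simp only [A] at this
    rw [inv_mul_eq_one] at this
    exact this.symm
  have hi1 : g i = 1 := by
    have := hconst (-i)
    simp only [add_neg_cancel, hg0] at this
    exact this.symm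
  funext t
  have := hconst (t - i)
  rw [add_sub_cancel] at this
  rw [this, hi1]

lemma eq_one_of_fixed [Fintype G] (hl : l.Prime) (hG : ¬ l ∣ Fintype.card G)
    {g : ZMod l → G} (hg0 : g 0 = 1) {j : ZMod l} (hj : j ≠ 0) (hfix : A j g = g) :
    g = fun _ => 1 := by
  haveI : Fact l.Prime := ⟨hl⟩
  haveI : NeZero l := ⟨hl.pos.ne'⟩
  have key : ∀ k, g (j + k) = g j * g k := by
    intro k
    have h := congrFun hfix k
    simp only [A] at h
    rwa [inv_mul_eq_iff_eq_mul] at h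
  have hpow : ∀ n : ℕ, g ((n : ZMod l) * j) = (g j) ^ n := by
    intro n
    induction n with
    | zero => simpa using hg0
    | succ n ih =>
      have : ((n + 1 : ℕ) : ZMod l) * j = j + (n : ZMod l) * j := by
        push_cast; ring
      rw [this, key, ih, pow_succ']
  have hl1 : (g j) ^ l = 1 := by
    have := hpow l
    rwa [ZMod.natCast_self, zero_mul, hg0, eq_comm] at this
  have hgj : g j = 1 := by
    have hd : orderOf (g j) ∣ l := orderOf_dvd_of_pow_eq_one hl1
    rcases (Nat.Prime.eq_one_or_self_of_dvd hl _ hd) with h1 | h1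
    · exact orderOf_eq_one_iff.mp h1
    · exfalso
      apply hG
      rw [← h1]
      exact orderOf_dvd_card
  funext k
  have hrep : ((k * j⁻¹).val : ZMod l) * j = k := by
    rw [ZMod.natCast_val, ZMod.cast_id, mul_assoc, inv_mul_cancel₀ hj, mul_one]
  have := hpow (k * j⁻¹).val
  rw [hrep, hgj, one_pow] at this
  exact this

lemma index_inj [Fintype G] (hl : l.Prime) (hG : ¬ l ∣ Fintype.card G)
    {g : ZMod l → G} (hg0 : g 0 = 1) (hg : g ≠ fun _ => 1)
    {i : ZMod l} {γ : G} (h : A i (C γ g) = g) : i = 0 := by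
  have iter : ∀ n : ℕ, A ((n : ZMod l) * i) (C (γ ^ n) g) = g := by
    intro n
    induction n with
    | zero => simp [C_one, A_zero hg0]
    | succ n ih =>
      have step : A i (C γ (A ((n : ZMod l) * i) (C (γ ^ n) g))) = g := by
        rw [ih]; exact h
      rw [← A_C, A_A, C_C] at step
      have e1 : (n : ZMod l) * i + i = ((n + 1 : ℕ) : ZMod l) * i := by push_cast; ring
      have e2 : γ ^ n * γ = γ ^ (n + 1) := by rw [pow_succ]
      rwa [e1, e2] at step
  by_contra hi
  have hm := iter (orderOf γ)
  rw [pow_orderOf_eq_one, C_one] at hm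
  haveI : Fact l.Prime := ⟨hl⟩
  have hne : ((orderOf γ : ℕ) : ZMod l) ≠ 0 := by
    rw [Ne, ZMod.natCast_eq_zero_iff]
    intro hdvd
    exact hG (hdvd.trans orderOf_dvd_card)
  have hji : ((orderOf γ : ℕ) : ZMod l) * i ≠ 0 := mul_ne_zero hne hi
  exact hg (eq_one_of_fixed hl hG hg0 hji hm)

/-- the combined (ZMod l × G)-orbit relation -/
def Rel (g h : ZMod l → G) : Prop := ∃ (i : ZMod l) (γ : G), A i (C γ g) = h

lemma rel_trans {g h k : ZMod l → G} (h1 : Rel g h) (h2 : Rel h k) : Rel g k := by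
  obtain ⟨i, γ, rfl⟩ := h1
  obtain ⟨j, δ, rfl⟩ := h2
  exact ⟨i + j, γ * δ, by rw [← A_C, A_A, C_C]⟩

lemma rel_symm {g h : ZMod l → G} (hg0 : g 0 = 1) (h1 : Rel g h) : Rel h g := by
  obtain ⟨i, γ, rfl⟩ := h1
  refine ⟨-i, γ⁻¹, ?_⟩
  rw [← A_C, A_A, add_neg_cancel, C_C, mul_inv_cancel, C_one, A_zero hg0]

noncomputable def rep (g : ZMod l → G) : ZMod l → G := Classical.epsilon (Rel g)

lemma rep_spec (g : ZMod l → G) : Rel g (rep g) :=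
  Classical.epsilon_spec (⟨A 0 (C 1 g), 0, 1, rfl⟩ : ∃ x, Rel g x)

lemma rep_eq {g h : ZMod l → G} (hg : g 0 = 1) (hgh : Rel g h) : rep g = rep h := by
  have hpred : Rel g = Rel h := by
    funext x
    exact propext ⟨fun hx => rel_trans (rel_symm hg hgh) hx, fun hx => rel_trans hgh hx⟩
  unfold rep
  rw [hpred]

end Stmt8Aux

open Stmt8Aux in
/-- Let `l` be a prime not dividing the order of the finite group `G`, and let
`T = {g : ℤ/lℤ → G | g 0 = 1}` with the normalized cyclic rotation action of `ℤ/lℤ`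
and the componentwise conjugation action of `G`.  Then there is a `G`-stable subset
`M` of `T ∖ {1}` such that `(i, m) ↦ i·m` is a bijection `ℤ/lℤ × M → T ∖ {1}`;
i.e. a `G`-stable system of representatives for the free `ℤ/lℤ`-orbits on `T ∖ {1}`. -/
theorem stmt_8 (l : ℕ) (hl : l.Prime) (G : Type*) [Group G] [Fintype G]
    (hG : ¬ l ∣ Fintype.card G)
    (act : ZMod l → (ZMod l → G) → (ZMod l → G))
    (hact : ∀ i g k, act i g k = (g i)⁻¹ * g (i + k))
    (conj : G → (ZMod l → G) → (ZMod l → G))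
    (hconj : ∀ γ g k, conj γ g k = γ⁻¹ * g k * γ) :
    ∃ M : Set (ZMod l → G),
      (∀ g ∈ M, g 0 = 1 ∧ g ≠ fun _ => 1) ∧
      (∀ g ∈ M, ∀ γ : G, conj γ g ∈ M) ∧
      ∀ g : ZMod l → G, g 0 = 1 → g ≠ (fun _ => 1) →
        ∃! p : ZMod l × (ZMod l → G), p.2 ∈ M ∧ act p.1 p.2 = g := by
  have hactA : act = A := by
    funext i g k; rw [hact]; rfl
  have hconjC : conj = C := by
    funext γ g k; rw [hconj]; rfl
  subst hactA hconjC
  classical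
  refine ⟨{m | m 0 = 1 ∧ m ≠ (fun _ => 1) ∧ ∃ γ : G, m = C γ (rep m)}, ?_, ?_, ?_⟩
  · exact fun g hg => ⟨hg.1, hg.2.1⟩
  · rintro m ⟨hm0, hm1, γ, hmγ⟩ δ
    refine ⟨C_apply_zero hm0, C_ne_one hm1, γ * δ, ?_⟩
    have hrep' : rep (C δ m) = rep m := by
      refine (rep_eq hm0 ⟨0, δ, ?_⟩).symm
      exact A_zero (C_apply_zero hm0)
    rw [hrep', ← C_C, ← hmγ]
  · intro g hg0 hg1
    obtain ⟨i, γ, hx⟩ := rep_spec g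
    set x := rep g with hxdef
    have hx0 : x 0 = 1 := by rw [← hx]; exact A_apply_zero _ _
    have hx1 : x ≠ fun _ => 1 := by
      rw [← hx]; exact A_ne_one (C_apply_zero hg0) (C_ne_one hg1)
    have hginv : A (-i) (C γ⁻¹ x) = g := by
      rw [← hx, ← A_C, A_A, add_neg_cancel, C_C, mul_inv_cancel, C_one, A_zero hg0]
    set m := C γ⁻¹ x with hmdef
    have hm0 : m 0 = 1 := C_apply_zero hx0
    have hm1 : m ≠ fun _ => 1 := C_ne_one hx1
    have hrelxm : Rel x m := ⟨0, γ⁻¹, A_zero hm0⟩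
    have hrepx : rep x = x := by
      have : Rel g x := ⟨i, γ, hx⟩
      rw [hxdef, ← rep_eq hg0 this]
    have hrepm : rep m = x := by
      rw [← rep_eq hx0 hrelxm, hrepx]
    refine ⟨⟨-i, m⟩, ⟨⟨hm0, hm1, γ⁻¹, by rw [hrepm]⟩, hginv⟩, ?_⟩
    rintro ⟨j, m'⟩ ⟨⟨hm'0, hm'1, δ, hm'δ⟩, hjm'⟩
    have hjm : A j m' = g := hjm'
    have hrepm' : rep m' = x := by
      have hrel : Rel m' g := ⟨j, 1, by rw [C_one]; exact hjm'⟩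
      rw [rep_eq hm'0 hrel]
    rw [hrepm'] at hm'δ
    have heq : A j (C δ x) = A (-i) (C γ⁻¹ x) := by
      rw [← hm'δ, hjm', hginv]
    have hji : j - -i = 0 := by
      have hcomp : A (j - -i) (C (δ * γ) x) = x := by
        have h1 := congrArg (A i) heq
        rw [A_A, A_A, neg_add_cancel, A_zero (C_apply_zero hx0)] at h1
        have h2 := congrArg (C γ) h1
        rw [← A_C, C_C, C_C, inv_mul_cancel, C_one] at h2
        rw [sub_neg_eq_add]
        exact h2
      exact index_inj hl hG hx0 hx1 hcomp
    have hji' : j = -i := by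
      rwa [sub_eq_zero] at hji
    have hm'm : m' = m := by
      have : A j m' = A j m := by rw [hjm, hji']; exact hginv.symm
      have h2 := congrArg (A (-j)) this
      rw [A_A, A_A, add_neg_cancel, A_zero hm'0, A_zero hm0] at h2
      exact h2
    exact Prod.ext hji' hm'm
end

section
/- Let l be a prime, let G be a finite group whose order is not divisible by l, let G' ≤ G be a subgroup, and let Q = G'\G be the set of right cosets of G' in G, with G acting on Q on the right by multiplication. Consider the set Q^{ℤ/lℤ} of tuples g : ℤ/lℤ → Q, with ℤ/lℤ acting by cyclic shift (i·g)(k) = g(k+i) and G acting diagonally on the right, (g·γ)(k) = g(k)·γ. Then for every non-constant tuple g, the map ℤ/lℤ × {g·γ : γ ∈ G} → Q^{ℤ/lℤ} sending (i, h) to i·h is injective. -/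
/-- Let `l` be a prime not dividing the order of the finite group `G`, let `G' ≤ G`,
and let `Q = G'\G` be the set of right cosets (modelled by a surjection `π : G → Q`
with `π a = π b ↔ b * a⁻¹ ∈ G'`), with the right `G`-action `π η · γ = π (η γ)`.
On tuples `g : ℤ/lℤ → Q`, `ℤ/lℤ` acts by cyclic shift and `G` acts diagonally on the
right.  Then for every non-constant tuple `g`, the map
`ℤ/lℤ × {g·γ : γ ∈ G} → Q^{ℤ/lℤ}`, `(i,h) ↦ i·h`, is injective. -/
theorem stmt_9 (l : ℕ) (hl : l.Prime) (G : Type*) [Group G] [Fintype G]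
    (hG : ¬ l ∣ Fintype.card G) (G' : Subgroup G)
    (Q : Type*) (π : G → Q) (hπsurj : Function.Surjective π)
    (hπ : ∀ a b : G, π a = π b ↔ b * a⁻¹ ∈ G')
    (sm : Q → G → Q) (hsm : ∀ (η γ : G), sm (π η) γ = π (η * γ))
    (shift : ZMod l → (ZMod l → Q) → (ZMod l → Q))
    (hshift : ∀ i g k, shift i g k = g (k + i))
    (diag : (ZMod l → Q) → G → (ZMod l → Q))
    (hdiag : ∀ g γ k, diag g γ k = sm (g k) γ) :
    ∀ g : ZMod l → Q, (¬ ∃ q : Q, g = fun _ => q) →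
      ∀ (i i' : ZMod l) (γ γ' : G),
        shift i (diag g γ) = shift i' (diag g γ') → i = i' ∧ diag g γ = diag g γ' := by
  intro g hg i i' γ γ' h
  haveI : Fact l.Prime := ⟨hl⟩
  -- basic action lemmas
  have sm_mul : ∀ (q : Q) (a b : G), sm (sm q a) b = sm q (a * b) := by
    intro q a b
    obtain ⟨r, rfl⟩ := hπsurj q
    rw [hsm, hsm, hsm, mul_assoc]
  have sm_one : ∀ q : Q, sm q 1 = q := by
    intro q
    obtain ⟨r, rfl⟩ := hπsurj q
    rw [hsm, mul_one]
  set j : ZMod l := i - i' with hj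
  set δ : G := γ * γ'⁻¹ with hδ
  -- key relation
  have hkey : ∀ k : ZMod l, sm (g (k + j)) δ = g k := by
    intro k
    have h1 : sm (g (k - i' + i)) γ = sm (g (k - i' + i')) γ' := by
      have := congrFun h (k - i')
      rwa [hshift, hshift, hdiag, hdiag] at this
    have h2 : k - i' + i' = k := by ring
    have h3 : k - i' + i = k + j := by rw [hj]; ring
    rw [h2, h3] at h1
    calc sm (g (k + j)) δ = sm (sm (g (k + j)) γ) γ'⁻¹ := by rw [sm_mul, hδ]
      _ = sm (sm (g k) γ') γ'⁻¹ := by rw [h1]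
      _ = g k := by rw [sm_mul, mul_inv_cancel, sm_one]
  by_cases hji : j = 0
  · have hii : i = i' := by
      have := sub_eq_zero.mp (hj ▸ hji)
      exact this
    refine ⟨hii, funext fun k => ?_⟩
    have h1 := congrFun h (k - i)
    rw [hshift, hshift, ← hii, sub_add_cancel] at h1
    exact h1
  · exfalso
    -- iterate hkey
    have hiter : ∀ (n : ℕ) (k : ZMod l), sm (g (k + (n : ZMod l) * j)) (δ ^ n) = g k := by
      intro n
      induction n with
      | zero => intro k; simp [sm_one]
      | succ n ih =>
        intro k
        have e1 : k + ((n + 1 : ℕ) : ZMod l) * j = (k + (n : ZMod l) * j) + j := by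
          push_cast; ring
        rw [e1, pow_succ', ← sm_mul]
        rw [hkey (k + (n : ZMod l) * j)]
        exact ih k
    have hfixl : ∀ k : ZMod l, sm (g k) (δ ^ l) = g k := by
      intro k
      have := hiter l k
      rwa [ZMod.natCast_self, zero_mul, add_zero] at this
    have hfixpow : ∀ (s : ℕ) (k : ZMod l), sm (g k) ((δ ^ l) ^ s) = g k := by
      intro s
      induction s with
      | zero => intro k; simp [sm_one]
      | succ s ih =>
        intro k
        rw [pow_succ, ← sm_mul, ih k, hfixl k]
    -- δ itself fixes all g k
    have hmpos : 0 < orderOf δ := orderOf_pos δ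
    have hco : Nat.Coprime l (orderOf δ) := by
      refine (Nat.Prime.coprime_iff_not_dvd hl).mpr fun hd => ?_
      exact hG (hd.trans (orderOf_dvd_card))
    have htot : l ^ Nat.totient (orderOf δ) ≡ 1 [MOD orderOf δ] :=
      Nat.ModEq.pow_totient hco
    have htpos : 0 < Nat.totient (orderOf δ) := Nat.totient_pos.mpr hmpos
    have hδpow : δ ^ (l ^ Nat.totient (orderOf δ)) = δ := by
      have : δ ^ (l ^ Nat.totient (orderOf δ)) = δ ^ 1 :=
        (pow_eq_pow_iff_modEq).mpr htot
      simpa using this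
    have hfix : ∀ k : ZMod l, sm (g k) δ = g k := by
      intro k
      have e : (δ ^ l) ^ (l ^ (Nat.totient (orderOf δ) - 1)) = δ := by
        rw [← pow_mul, ← pow_succ', Nat.sub_add_cancel htpos]
        exact hδpow
      have := hfixpow (l ^ (Nat.totient (orderOf δ) - 1)) k
      rwa [e] at this
    -- hence g is periodic with period j, so constant
    have hper : ∀ k : ZMod l, g (k + j) = g k := by
      intro k
      rw [← hkey k, hfix (k + j)]
    have hstep : ∀ (n : ℕ), g ((n : ZMod l) * j) = g 0 := by
      intro n
      induction n with
      | zero => simp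
      | succ n ih =>
        have e1 : ((n + 1 : ℕ) : ZMod l) * j = (n : ZMod l) * j + j := by push_cast; ring
        rw [e1, hper, ih]
    apply hg
    refine ⟨g 0, funext fun k => ?_⟩
    have := hstep (k * j⁻¹).val
    rwa [ZMod.natCast_val, ZMod.cast_id, mul_assoc, inv_mul_cancel₀ hji, mul_one] at this
end

section
/- Let l be a prime, let G be a finite group whose order is not divisible by l, let G' ≤ G be a subgroup, and let Q = G'\G be the set of right cosets of G' in G, with G acting on Q on the right by multiplication. Consider the set Q^{ℤ/lℤ} of tuples g : ℤ/lℤ → Q, with ℤ/lℤ acting by cyclic shift (i·g)(k) = g(k+i) and G acting diagonally on the right, (g·γ)(k) = g(k)·γ. Then there exists a subset M of the set of non-constant tuples which is stable under the diagonal right G-action and such that the map ℤ/lℤ × M → {non-constant tuples in Q^{ℤ/lℤ}} sending (i, m) to i·m is bijective. -/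
/-- Let `l` be a prime not dividing the order of the finite group `G`, let `G' ≤ G`,
and let `Q = G'\G` be the set of right cosets (modelled by a surjection `π : G → Q`
with `π a = π b ↔ b * a⁻¹ ∈ G'`), with the right `G`-action `π η · γ = π (η γ)`.
On tuples `g : ℤ/lℤ → Q`, `ℤ/lℤ` acts by cyclic shift and `G` acts diagonally on the
right.  Then there is a subset `M` of the non-constant tuples, stable under the
diagonal right `G`-action, such that `(i, m) ↦ i·m` is a bijection from
`ℤ/lℤ × M` onto the set of non-constant tuples. -/
theorem stmt_10 (l : ℕ) (hl : l.Prime) (G : Type*) [Group G] [Fintype G]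
    (hG : ¬ l ∣ Fintype.card G) (G' : Subgroup G)
    (Q : Type*) (π : G → Q) (hπsurj : Function.Surjective π)
    (hπ : ∀ a b : G, π a = π b ↔ b * a⁻¹ ∈ G')
    (sm : Q → G → Q) (hsm : ∀ (η γ : G), sm (π η) γ = π (η * γ))
    (shift : ZMod l → (ZMod l → Q) → (ZMod l → Q))
    (hshift : ∀ i g k, shift i g k = g (k + i))
    (diag : (ZMod l → Q) → G → (ZMod l → Q))
    (hdiag : ∀ g γ k, diag g γ k = sm (g k) γ) :
    ∃ M : Set (ZMod l → Q),
      (∀ g ∈ M, ¬ ∃ q : Q, g = fun _ => q) ∧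
      (∀ g ∈ M, ∀ γ : G, diag g γ ∈ M) ∧
      ∀ g : ZMod l → Q, (¬ ∃ q : Q, g = fun _ => q) →
        ∃! p : ZMod l × (ZMod l → Q), p.2 ∈ M ∧ shift p.1 p.2 = g := by
  haveI : Fact l.Prime := ⟨hl⟩
  -- basic algebraic identities
  have hsm_mul : ∀ (q : Q) (γ γ' : G), sm (sm q γ) γ' = sm q (γ * γ') := by
    intro q γ γ'
    obtain ⟨η, rfl⟩ := hπsurj q
    rw [hsm, hsm, hsm, mul_assoc]
  have hsm_one : ∀ q : Q, sm q 1 = q := by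
    intro q; obtain ⟨η, rfl⟩ := hπsurj q; rw [hsm, mul_one]
  have hshift_zero : ∀ g, shift 0 g = g := by
    intro g; funext k; rw [hshift, add_zero]
  have hshift_add : ∀ i j g, shift i (shift j g) = shift (i + j) g := by
    intro i j g; funext k; rw [hshift, hshift, hshift, add_assoc]
  have hdiag_one : ∀ g, diag g 1 = g := by
    intro g; funext k; rw [hdiag, hsm_one]
  have hdiag_mul : ∀ g γ γ', diag (diag g γ) γ' = diag g (γ * γ') := by
    intro g γ γ'; funext k; rw [hdiag, hdiag, hdiag, hsm_mul]
  have hcomm : ∀ g i γ, diag (shift i g) γ = shift i (diag g γ) := by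
    intro g i γ; funext k; rw [hdiag, hshift, hshift, hdiag]
  set NC : (ZMod l → Q) → Prop := fun g => ¬ ∃ q : Q, g = fun _ => q with hNC
  have hNC_shift : ∀ g i, NC g → NC (shift i g) := by
    intro g i hg ⟨q, hq⟩
    exact hg ⟨q, funext fun x => by
      have := congrFun hq (x - i)
      rw [hshift, sub_add_cancel] at this
      exact this⟩
  have hNC_diag : ∀ g γ, NC g → NC (diag g γ) := by
    intro g γ hg ⟨q, hq⟩
    refine hg ⟨sm q γ⁻¹, funext fun x => ?_⟩
    have := congrFun hq x
    rw [hdiag] at this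
    rw [← this, hsm_mul, mul_inv_cancel, hsm_one]
  -- freeness of the shift action on non-constant tuples
  have hfree : ∀ g, NC g → ∀ k : ZMod l, shift k g = g → k = 0 := by
    intro g hg k hk
    by_contra hk0
    have hstep : ∀ x : ZMod l, g (x + k) = g x := by
      intro x; have := congrFun hk x; rw [hshift] at this; exact this
    have hiter : ∀ n : ℕ, ∀ x : ZMod l, g (x + (n : ZMod l) * k) = g x := by
      intro n
      induction n with
      | zero => intro x; simp
      | succ n ih =>
        intro x
        have : ((n + 1 : ℕ) : ZMod l) * k = (n : ZMod l) * k + k := by push_cast; ring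
        rw [this, ← add_assoc, hstep, ih]
    refine hg ⟨g 0, funext fun x => ?_⟩
    have hx : x = 0 + ((x * k⁻¹).val : ZMod l) * k := by
      rw [ZMod.natCast_val, ZMod.cast_id, zero_add, mul_assoc,
        inv_mul_cancel₀ hk0, mul_one]
    calc g x = g (0 + ((x * k⁻¹).val : ZMod l) * k) := by rw [← hx]
    _ = g 0 := hiter _ 0
  -- key: if the diagonal action of γ equals a shift, then the shift is trivial
  have hkey : ∀ g, NC g → ∀ (γ : G) (i : ZMod l), diag g γ = shift i g →
      i = 0 ∧ diag g γ = g := by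
    intro g hg γ i hgi
    have hiter : ∀ n : ℕ, diag g (γ ^ n) = shift ((n : ZMod l) * i) g := by
      intro n
      induction n with
      | zero => simp [hdiag_one, hshift_zero]
      | succ n ih =>
        rw [pow_succ, ← hdiag_mul, ih, hcomm, hgi, hshift_add]
        congr 1
        push_cast; ring
    have h1 : diag g (γ ^ orderOf γ) = shift ((orderOf γ : ZMod l) * i) g :=
      hiter (orderOf γ)
    rw [pow_orderOf_eq_one, hdiag_one] at h1
    have h2 : (orderOf γ : ZMod l) * i = 0 := hfree g hg _ h1.symm
    have h3 : (orderOf γ : ZMod l) ≠ 0 := by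
      rw [Ne, ZMod.natCast_eq_zero_iff]
      intro hdvd
      exact hG (hdvd.trans (orderOf_dvd_card))
    have hi : i = 0 := by
      rcases mul_eq_zero.mp h2 with h | h
      · exact absurd h h3
      · exact h
    refine ⟨hi, ?_⟩
    rw [hgi, hi, hshift_zero]
  -- the orbit equivalence relation of the combined action
  have hrefl : ∀ g, shift 0 (diag g 1) = g := by
    intro g; rw [hdiag_one, hshift_zero]
  let s : Setoid (ZMod l → Q) :=
    { r := fun a b => ∃ (i : ZMod l) (γ : G), shift i (diag a γ) = b
      iseqv := by
        constructor
        · intro a; exact ⟨0, 1, hrefl a⟩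
        · rintro a b ⟨i, γ, rfl⟩
          refine ⟨-i, γ⁻¹, ?_⟩
          rw [hcomm, hshift_add, hdiag_mul, mul_inv_cancel, hdiag_one,
            neg_add_cancel, hshift_zero]
        · rintro a b c ⟨i, γ, rfl⟩ ⟨j, δ, rfl⟩
          refine ⟨j + i, γ * δ, ?_⟩
          rw [← hdiag_mul, hcomm, hshift_add]
    }
  let rep : (ZMod l → Q) → (ZMod l → Q) := fun g => (Quotient.mk s g).out
  have hrep1 : ∀ g, ∃ (i : ZMod l) (γ : G), shift i (diag (rep g) γ) = g := by
    intro g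
    exact Quotient.exact (Quotient.out_eq (Quotient.mk s g))
  have hrep2 : ∀ g h, (∃ (i : ZMod l) (γ : G), shift i (diag g γ) = h) →
      rep g = rep h := by
    intro g h hgh
    show (Quotient.mk s g).out = (Quotient.mk s h).out
    rw [Quotient.sound (hgh : s.r g h)]
  -- the transversal
  refine ⟨{ g | NC g ∧ ∃ γ : G, g = diag (rep g) γ }, ?_, ?_, ?_⟩
  · intro g hg; exact hg.1
  · rintro g ⟨hg, γ, hγ⟩ γ'
    refine ⟨hNC_diag g γ' hg, ?_⟩
    have hrepeq : rep (diag g γ') = rep g := by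
      refine (hrep2 g (diag g γ') ⟨0, γ', ?_⟩).symm
      rw [hshift_zero]
    rw [hrepeq]
    exact ⟨γ * γ', by rw [← hdiag_mul, ← hγ]⟩
  · intro g hg
    obtain ⟨i, γ, hig⟩ := hrep1 g
    set r := rep g with hr
    have hdd : shift (-i) g = diag r γ := by
      rw [← hig, hshift_add, neg_add_cancel, hshift_zero]
    have hrel0 : rep g = rep (diag r γ) :=
      hrep2 g (diag r γ) ⟨-i, 1, by rw [hdiag_one]; exact hdd⟩
    refine ⟨(i, diag r γ), ⟨⟨?_, ?_⟩, hig⟩, ?_⟩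
    · rw [← hdd]; exact hNC_shift g (-i) hg
    · exact ⟨γ, by rw [← hrel0, ← hr]⟩
    · rintro ⟨j, m⟩ ⟨⟨hmNC, δ, hmδ⟩, hjm⟩
      dsimp only at hmNC hmδ hjm ⊢
      have hmg : shift (-j) g = m := by
        rw [← hjm, hshift_add, neg_add_cancel, hshift_zero]
      have hrelm : rep g = rep m :=
        hrep2 g m ⟨-j, 1, by rw [hdiag_one]; exact hmg⟩
      rw [← hrelm, ← hr] at hmδ
      have e1 : diag m (δ⁻¹ * γ) = diag r γ := by
        rw [hmδ, hdiag_mul, mul_inv_cancel_left]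
      have e2 : shift (j - i) m = diag r γ := by
        rw [← hmg, hshift_add, show j - i + -j = -i by ring]
        exact hdd
      obtain ⟨h0, h21⟩ := hkey m hmNC (δ⁻¹ * γ) (j - i) (e1.trans e2.symm)
      refine Prod.ext ?_ ?_
      · exact sub_eq_zero.mp h0
      · exact h21.symm.trans e1
end

section
/- Let R be a commutative ring, let S be a commutative R-algebra, and let G be a finite group acting on S by R-algebra automorphisms such that the R-algebra homomorphism S ⊗_R S → ∏_{γ∈G} S, a ⊗ b ↦ (a·γ(b))_{γ∈G}, is bijective. Then for every integer l ≥ 2, the R-algebra homomorphism from the l-fold tensor product S^{⊗_R l} to the product ∏_{(g_2,…,g_l)∈G^{l−1}} S which sends a_1 ⊗ a_2 ⊗ ⋯ ⊗ a_l to the family ( a_1 · g_2(a_2) ⋯ g_l(a_l) )_{(g_2,…,g_l)} is bijective. -/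
/-!
Induction on the number of tensor factors, splitting off the last one:
`S^{⊗(n+2)} ≅ S^{⊗(n+1)} ⊗ S ≅ (G^n → S) ⊗ S ≅ G^n → S ⊗ S ≅ G^n → G → S ≅ G^{n+1} → S`,
where the third step uses that `G^n` is finite and the fourth is `S ⊗_R S ≅ ∏_G S` in each
coordinate. On pure tensors this composite is `a ↦ (a₀ · g₁(a₁) ⋯ gₙ₊₁(aₙ₊₁))_g`, so the given map
agrees with a linear equivalence.
-/

open scoped TensorProduct
open PiTensorProduct

section

variable (R : Type*) [CommSemiring R] (M : Type*) [AddCommMonoid M] [Module R M]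

noncomputable def tensorPowerSuccEquiv (n : ℕ) :
    (⨂[R] _ : Fin (n + 1), M) ≃ₗ[R] (⨂[R] _ : Fin n, M) ⊗[R] M :=
  reindex R (fun _ => M) finSumFinEquiv.symm ≪≫ₗ (tmulEquiv R M).symm ≪≫ₗ
    TensorProduct.congr (LinearEquiv.refl R _) (subsingletonEquiv 0)

variable {R M} in
@[simp]
theorem tensorPowerSuccEquiv_tprod (n : ℕ) (a : Fin (n + 1) → M) :
    tensorPowerSuccEquiv R M n (tprod R a) = tprod R (Fin.init a) ⊗ₜ a (Fin.last n) := by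
  simp [tensorPowerSuccEquiv]
  rfl

end

section

variable {R : Type*} [CommRing R] {S : Type*} [CommRing S] [Algebra R S]
  {G : Type*} [Fintype G] [DecidableEq G]

noncomputable def tensorPowerEquivPi (e : S ⊗[R] S ≃ₗ[R] (G → S)) :
    (n : ℕ) → (⨂[R] _ : Fin (n + 1), S) ≃ₗ[R] ((Fin n → G) → S)
  | 0 => subsingletonEquiv (ι := Fin 1) 0 ≪≫ₗ (LinearEquiv.funUnique (Fin 0 → G) R S).symm
  | n + 1 => tensorPowerSuccEquiv R S (n + 1) ≪≫ₗ
      TensorProduct.congr (tensorPowerEquivPi e n) (LinearEquiv.refl R S) ≪≫ₗ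
      TensorProduct.piLeft .. ≪≫ₗ LinearEquiv.piCongrRight (fun _ => e) ≪≫ₗ
      (LinearEquiv.curry R S (Fin n → G) G).symm ≪≫ₗ
      LinearEquiv.funCongrLeft R S (Fin.succFunEquiv G n)

theorem tensorPowerEquivPi_tprod (e : S ⊗[R] S ≃ₗ[R] (G → S)) (σ : G → S → S)
    (he : ∀ a b, e (a ⊗ₜ b) = fun γ => a * σ γ b) (n : ℕ) (a : Fin (n + 1) → S) :
    tensorPowerEquivPi e n (tprod R a) = fun g => a 0 * ∏ j : Fin n, σ (g j) (a j.succ) := by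
  induction n with
  | zero =>
    funext g
    simp [tensorPowerEquivPi]
  | succ n ih =>
    funext g
    simp only [tensorPowerEquivPi, TensorProduct.piLeft, LinearEquiv.trans_apply,
      tensorPowerSuccEquiv_tprod, TensorProduct.congr_tmul, ih, LinearEquiv.refl_apply,
      TensorProduct.comm_tmul, TensorProduct.piRight_apply, TensorProduct.piRightHom_tmul,
      LinearEquiv.coe_curry_symm, LinearEquiv.funCongrLeft_apply, LinearMap.funLeft_apply,
      Fin.succFunEquiv_apply, Function.uncurry_apply_pair, LinearEquiv.piCongrRight_apply, he]
    rw [Fin.prod_univ_castSucc, ← mul_assoc]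
    rfl

end

/-- Affine form of the trivialization `G^{l-1} × X ≅ X ×_Y ⋯ ×_Y X` for a principal
`G`-bundle: if `G` is a finite group acting on the commutative `R`-algebra `S` by
`R`-algebra automorphisms such that `S ⊗_R S → ∏_{γ ∈ G} S`, `a ⊗ b ↦ (a·γ(b))_γ`,
is bijective, then for every `l ≥ 2` the `R`-algebra map
`S^{⊗_R l} → ∏_{(g₂,…,g_l) ∈ G^{l-1}} S`,
`a₁ ⊗ ⋯ ⊗ a_l ↦ (a₁·g₂(a₂)⋯g_l(a_l))`, is bijective. -/
theorem stmt_11 (R : Type*) [CommRing R] (S : Type*) [CommRing S] [Algebra R S]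
    (G : Type*) [Group G] [Fintype G] (ρ : G →* (S ≃ₐ[R] S))
    (Φ : S ⊗[R] S →ₐ[R] (G → S))
    (hΦ : ∀ a b : S, Φ (a ⊗ₜ[R] b) = fun γ => a * ρ γ b)
    (hΦbij : Function.Bijective Φ)
    (l : ℕ) (hl : 2 ≤ l)
    (Ψ : (⨂[R] _ : Fin l, S) →ₐ[R] ((Fin (l - 1) → G) → S))
    (hΨ : ∀ a : Fin l → S,
      Ψ (PiTensorProduct.tprod R a) =
        fun g => a ⟨0, by omega⟩ *
          ∏ i : Fin (l - 1), ρ (g i) (a (Fin.cast (by omega) i.succ))) :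
    Function.Bijective Ψ := by
  classical
  obtain ⟨n, rfl⟩ : ∃ n, l = n + 1 := ⟨l - 1, by omega⟩
  let e : S ⊗[R] S ≃ₗ[R] (G → S) := .ofBijective Φ.toLinearMap hΦbij
  have hΨe : Ψ.toLinearMap = (tensorPowerEquivPi e n).toLinearMap :=
    PiTensorProduct.ext <| MultilinearMap.ext fun a =>
      (hΨ a).trans (tensorPowerEquivPi_tprod e (fun γ => ρ γ) hΦ n a).symm
  rw [← AlgHom.coe_toLinearMap, hΨe]
  exact (tensorPowerEquivPi e n).bijective
end
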